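/- For any two finite simple graphs G and H, the 3-token graph of their disjoint union G ⊕ H is isomorphic to the disjoint union Γ₃(G) ⊕ Γ₃(H) ⊕ (Γ₂(G) □ H) ⊕ (Γ₂(H) □ G), where □ denotes the Cartesian product of graphs. -/

import Mathlib

open SimpleGraph Finset

/-- The `k`-token graph of a graph `G`: vertices are `k`-element subsets of the vertex set,
two subsets adjacent iff their symmetric difference is `{x, y}` with `xy` an edge of `G`. -/
def tokenGraph {V : Type*} [DecidableEq V] (G : SimpleGraph V) (k : ℕ) :
    SimpleGraph {s : Finset V // s.card = k} where
  Adj A B := ∃ x y, G.Adj x y ∧ symmDiff A.1 B.1 = {x, y}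
  symm := by
    refine ⟨?_⟩
    rintro A B ⟨x, y, hxy, h⟩
    exact ⟨x, y, hxy, by rwa [symmDiff_comm]⟩
  loopless := by
    refine ⟨?_⟩
    rintro A ⟨x, y, hxy, h⟩
    rw [symmDiff_self] at h
    exact (Finset.insert_nonempty x {y}).ne_empty (by simpa using h.symm)

/-- Vertex set of the cubical staircase graph `CS n` (1-indexed coordinates). -/
abbrev CSVert (n : ℕ) :=
  {v : ℕ × ℕ × ℕ // 1 ≤ v.1 ∧ v.1 ≤ n - 2 ∧ 1 ≤ v.2.1 ∧ v.2.1 ≤ v.1 ∧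
    1 ≤ v.2.2 ∧ v.2.2 ≤ n - 1 - v.1}

/-- The cubical staircase graph `CS n`: two vertices are adjacent iff they differ in exactly
one coordinate, by exactly 1. -/
def CS (n : ℕ) : SimpleGraph (CSVert n) where
  Adj a b :=
    (a.1.1 = b.1.1 ∧ a.1.2.1 = b.1.2.1 ∧ (a.1.2.2 + 1 = b.1.2.2 ∨ b.1.2.2 + 1 = a.1.2.2)) ∨
    (a.1.1 = b.1.1 ∧ a.1.2.2 = b.1.2.2 ∧ (a.1.2.1 + 1 = b.1.2.1 ∨ b.1.2.1 + 1 = a.1.2.1)) ∨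
    (a.1.2.1 = b.1.2.1 ∧ a.1.2.2 = b.1.2.2 ∧ (a.1.1 + 1 = b.1.1 ∨ b.1.1 + 1 = a.1.1))
  symm := ⟨fun a b h => by omega⟩
  loopless := ⟨fun a h => by omega⟩

/-- Disjoint union of an arbitrary family of graphs. -/
def sigmaGraph {ι : Type*} {V : ι → Type*} (G : ∀ i, SimpleGraph (V i)) :
    SimpleGraph (Σ i, V i) where
  Adj a b := ∃ (i : ι) (x y : V i), (G i).Adj x y ∧ a = ⟨i, x⟩ ∧ b = ⟨i, y⟩
  symm := by refine ⟨?_⟩; rintro a b ⟨i, x, y, h, rfl, rfl⟩; exact ⟨i, y, x, h.symm, rfl, rfl⟩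
  loopless := by
    refine ⟨?_⟩
    rintro a ⟨i, x, y, h, rfl, he⟩
    exact h.ne (by simpa using he)

/-!
A `k`-subset of `V(G) ⊕ V(H)` is the disjoint union of an `i`-subset of `V(G)` and a
`(k - i)`-subset of `V(H)`, and a token move along an edge of `G ⊕ H` moves a token inside `G`
or inside `H`, leaving the other part fixed. Hence the `k`-subsets with exactly `i` tokens on the
`G` side span a copy of `Γ_i(G) □ Γ_{k-i}(H)`, no edge joins two different copies, and every
vertex lies in one of them. For `k = 3` the four copies are the four summands, because `Γ_0` is a
single vertex and `Γ_1(G) ≅ G`.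
-/

namespace SimpleGraph

variable {α β α' β' : Type*}

def Iso.boxProdCongr {G : SimpleGraph α} {G' : SimpleGraph α'} {H : SimpleGraph β}
    {H' : SimpleGraph β'} (f : G ≃g G') (g : H ≃g H') : (G □ H) ≃g G' □ H' where
  toEquiv := f.toEquiv.prodCongr g.toEquiv
  map_rel_iff' := by simp [boxProd_adj, f.map_adj_iff, g.map_adj_iff]

def boxProdUnique [Unique β] (G : SimpleGraph α) (H : SimpleGraph β) : (G □ H) ≃g G where
  toEquiv := Equiv.prodUnique α β
  map_rel_iff' {p q} := by simp [boxProd_adj, Subsingleton.elim p.2 q.2]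

def uniqueBoxProd [Unique α] (G : SimpleGraph α) (H : SimpleGraph β) : (G □ H) ≃g H :=
  (boxProdComm G H).trans (boxProdUnique H G)

namespace Embedding

variable {V₁ V₂ W ι : Type*} {G₁ : SimpleGraph V₁} {G₂ : SimpleGraph V₂} {K : SimpleGraph W}

def sumElim (f : G₁ ↪g K) (g : G₂ ↪g K) (ℓ : W → ι) (hℓ : ∀ ⦃u v⦄, K.Adj u v → ℓ u = ℓ v)
    (hfg : ∀ x y, ℓ (f x) ≠ ℓ (g y)) : G₁ ⊕g G₂ ↪g K where
  toFun := Sum.elim f g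
  inj' := by
    rintro (x | x) (y | y) h
    · exact congrArg Sum.inl (f.injective h)
    · exact absurd (congrArg ℓ h) (hfg x y)
    · exact absurd (congrArg ℓ h).symm (hfg y x)
    · exact congrArg Sum.inr (g.injective h)
  map_rel_iff' {u v} := by
    rcases u with x | x <;> rcases v with y | y
    · exact f.map_adj_iff.trans sum_adj_inl.symm
    · exact iff_of_false (fun h => hfg x y (hℓ h)) (not_adj_sum_inl_inr x y)
    · exact iff_of_false (fun h => hfg y x (hℓ h).symm) fun h => not_adj_sum_inl_inr y x h.symm
    · exact g.map_adj_iff.trans sum_adj_inr.symm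

variable (f : G₁ ↪g K) (g : G₂ ↪g K) (ℓ : W → ι) (hℓ : ∀ ⦃u v⦄, K.Adj u v → ℓ u = ℓ v)
  (hfg : ∀ x y, ℓ (f x) ≠ ℓ (g y))

@[simp]
lemma sumElim_inl (x : V₁) : sumElim f g ℓ hℓ hfg (.inl x) = f x :=
  rfl

@[simp]
lemma sumElim_inr (y : V₂) : sumElim f g ℓ hℓ hfg (.inr y) = g y :=
  rfl

lemma range_sumElim : Set.range (sumElim f g ℓ hℓ hfg) = Set.range f ∪ Set.range g :=
  Set.Sum.elim_range f g

end Embedding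

end SimpleGraph

section TokenGraph

variable {α β : Type*} [DecidableEq α] [DecidableEq β]

lemma Finset.disjSum_symmDiff_disjSum (A A' : Finset α) (B B' : Finset β) :
    symmDiff (A.disjSum B) (A'.disjSum B') = (symmDiff A A').disjSum (symmDiff B B') := by
  ext (a | b) <;> simp [mem_symmDiff]

lemma Finset.pair_inl_eq_disjSum (x y : α) :
    ({Sum.inl x, Sum.inl y} : Finset (α ⊕ β)) = ({x, y} : Finset α).disjSum ∅ := by
  ext (a | b) <;> simp

lemma Finset.pair_inr_eq_disjSum (x y : β) :
    ({Sum.inr x, Sum.inr y} : Finset (α ⊕ β)) = (∅ : Finset α).disjSum {x, y} := by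
  ext (a | b) <;> simp

lemma exists_sum_adj_symmDiff_disjSum_iff (G : SimpleGraph α) (H : SimpleGraph β)
    (A A' : Finset α) (B B' : Finset β) :
    (∃ x y, (G ⊕g H).Adj x y ∧ symmDiff (A.disjSum B) (A'.disjSum B') = {x, y}) ↔
      (∃ x y, G.Adj x y ∧ symmDiff A A' = {x, y}) ∧ B = B' ∨
        (∃ x y, H.Adj x y ∧ symmDiff B B' = {x, y}) ∧ A = A' := by
  simp only [disjSum_symmDiff_disjSum]
  constructor
  · rintro ⟨x | x, y | y, hxy, h⟩
    · rw [pair_inl_eq_disjSum, disjSum_inj, ← bot_eq_empty, symmDiff_eq_bot] at h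
      exact .inl ⟨⟨x, y, sum_adj_inl.mp hxy, h.1⟩, h.2⟩
    · exact absurd hxy (not_adj_sum_inl_inr x y)
    · exact absurd hxy.symm (not_adj_sum_inl_inr y x)
    · rw [pair_inr_eq_disjSum, disjSum_inj, ← bot_eq_empty, symmDiff_eq_bot] at h
      exact .inr ⟨⟨x, y, sum_adj_inr.mp hxy, h.2⟩, h.1⟩
  · rintro (⟨⟨x, y, hxy, h⟩, rfl⟩ | ⟨⟨x, y, hxy, h⟩, rfl⟩)
    · exact ⟨.inl x, .inl y, hxy, by rw [h, symmDiff_self, pair_inl_eq_disjSum]; rfl⟩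
    · exact ⟨.inr x, .inr y, hxy, by rw [h, symmDiff_self, pair_inr_eq_disjSum]; rfl⟩

instance : Unique {s : Finset α // #s = 0} where
  default := ⟨∅, card_empty⟩
  uniq s := Subtype.ext (card_eq_zero.mp s.2)

lemma exists_adj_symmDiff_singleton_iff (G : SimpleGraph α) (a b : α) :
    (∃ x y, G.Adj x y ∧ symmDiff {a} {b} = ({x, y} : Finset α)) ↔ G.Adj a b := by
  constructor
  · rintro ⟨x, y, hxy, h⟩
    have hab : a ≠ b := by
      rintro rfl
      rw [symmDiff_self] at h
      exact insert_ne_empty x {y} h.symm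
    have hpair : ({a, b} : Finset α) = {x, y} := by
      rw [← h]
      ext c
      simp only [mem_insert, mem_singleton, mem_symmDiff]
      grind
    have ha : a ∈ ({x, y} : Finset α) := hpair ▸ mem_insert_self a {b}
    have hb : b ∈ ({x, y} : Finset α) := hpair ▸ mem_insert_of_mem (mem_singleton_self b)
    simp only [mem_insert, mem_singleton] at ha hb
    rcases ha with rfl | rfl <;> rcases hb with rfl | rfl
    exacts [absurd rfl hab, hxy, hxy.symm, absurd rfl hab]
  · intro h
    refine ⟨a, b, h, ?_⟩
    ext c
    simp only [mem_insert, mem_singleton, mem_symmDiff]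
    grind [h.ne]

noncomputable def tokenGraphOneIso (G : SimpleGraph α) : tokenGraph G 1 ≃g G :=
  (RelIso.ofSurjective
    { toFun a := ⟨{a}, card_singleton a⟩
      inj' _ _ hab := singleton_injective (congrArg Subtype.val hab)
      map_rel_iff' := exists_adj_symmDiff_singleton_iff G _ _ }
    (fun s => (card_eq_one.mp s.2).imp fun _ ha => Subtype.ext ha.symm)).symm

variable (G : SimpleGraph α) (H : SimpleGraph β)

def tokenGraphBoxProdEmbedding {i j k : ℕ} (h : i + j = k) :
    (tokenGraph G i □ tokenGraph H j) ↪g tokenGraph (G ⊕g H) k where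
  toFun p := ⟨p.1.1.disjSum p.2.1, by rw [card_disjSum, p.1.2, p.2.2, h]⟩
  inj' p q hpq := by
    obtain ⟨hA, hB⟩ := disjSum_inj.mp (congrArg Subtype.val hpq)
    exact Prod.ext (Subtype.ext hA) (Subtype.ext hB)
  map_rel_iff' {p q} := by
    simp only [boxProd_adj, Subtype.ext_iff]
    exact exists_sum_adj_symmDiff_disjSum_iff G H _ _ _ _

variable {G H}

@[simp]
lemma coe_tokenGraphBoxProdEmbedding_apply {i j k : ℕ} (h : i + j = k)
    (p : {s : Finset α // #s = i} × {s : Finset β // #s = j}) :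
    (tokenGraphBoxProdEmbedding G H h p).1 = p.1.1.disjSum p.2.1 :=
  rfl

variable {W : Type*} {K : SimpleGraph W}

def tokenGraphSumEmbedding {i j k : ℕ} (h : i + j = k)
    (φ : (tokenGraph G i □ tokenGraph H j) ≃g K) : K ↪g tokenGraph (G ⊕g H) k :=
  (tokenGraphBoxProdEmbedding G H h).comp φ.symm.toEmbedding

@[simp]
lemma card_toLeft_tokenGraphSumEmbedding {i j k : ℕ} (h : i + j = k)
    (φ : (tokenGraph G i □ tokenGraph H j) ≃g K) (x : W) :
    #(tokenGraphSumEmbedding h φ x).1.toLeft = i := by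
  simp [tokenGraphSumEmbedding, (φ.symm x).1.2]

lemma range_tokenGraphSumEmbedding {i j k : ℕ} (h : i + j = k)
    (φ : (tokenGraph G i □ tokenGraph H j) ≃g K) :
    Set.range (tokenGraphSumEmbedding h φ) = {s | #s.1.toLeft = i} := by
  ext s
  refine ⟨fun ⟨x, hx⟩ => hx ▸ card_toLeft_tokenGraphSumEmbedding h φ x,
    fun (hs : #s.1.toLeft = i) => ?_⟩
  have hj : #s.1.toRight = j := by
    have := card_toLeft_add_card_toRight (u := s.1)
    omega
  refine ⟨φ (⟨_, hs⟩, ⟨_, hj⟩), Subtype.ext ?_⟩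
  simp [tokenGraphSumEmbedding, toLeft_disjSum_toRight]

lemma card_toLeft_eq_of_tokenGraph_sum_adj {k : ℕ} {s t : {s : Finset (α ⊕ β) // #s = k}}
    (hst : (tokenGraph (G ⊕g H) k).Adj s t) : #s.1.toLeft = #t.1.toLeft := by
  have hmove := (exists_sum_adj_symmDiff_disjSum_iff G H s.1.toLeft t.1.toLeft s.1.toRight
    t.1.toRight).mp (by rwa [toLeft_disjSum_toRight, toLeft_disjSum_toRight])
  have hs := card_toLeft_add_card_toRight (u := s.1)
  have ht := card_toLeft_add_card_toRight (u := t.1)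
  rcases hmove with ⟨-, hright⟩ | ⟨-, hleft⟩
  · rw [hright] at hs
    omega
  · rw [hleft]

end TokenGraph

theorem stmt0_general {α β : Type*} [DecidableEq α] [DecidableEq β]
    (G : SimpleGraph α) (H : SimpleGraph β) :
    Nonempty (tokenGraph (G ⊕g H) 3 ≃g
      (tokenGraph G 3 ⊕g tokenGraph H 3 ⊕g (tokenGraph G 2 □ H) ⊕g (tokenGraph H 2 □ G))) := by
  let ℓ (s : {s : Finset (α ⊕ β) // #s = 3}) : ℕ := #s.1.toLeft
  have hℓ : ∀ ⦃s t⦄, (tokenGraph (G ⊕g H) 3).Adj s t → ℓ s = ℓ t :=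
    fun _ _ => card_toLeft_eq_of_tokenGraph_sum_adj
  let e₃₀ := tokenGraphSumEmbedding (k := 3) rfl
    (boxProdUnique (tokenGraph G 3) (tokenGraph H 0))
  let e₀₃ := tokenGraphSumEmbedding (k := 3) rfl
    (uniqueBoxProd (tokenGraph G 0) (tokenGraph H 3))
  let e₂₁ := tokenGraphSumEmbedding (k := 3) rfl
    (Iso.boxProdCongr (Iso.refl (G := tokenGraph G 2)) (tokenGraphOneIso H))
  let e₁₂ := tokenGraphSumEmbedding (k := 3) rfl
    ((Iso.boxProdCongr (tokenGraphOneIso G) (Iso.refl (G := tokenGraph H 2))).trans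
      (boxProdComm _ _))
  let e := Embedding.sumElim (Embedding.sumElim (Embedding.sumElim e₃₀ e₀₃ ℓ hℓ
    (by simp [ℓ, e₃₀, e₀₃])) e₂₁ ℓ hℓ (by rintro (x | x) y <;> simp [ℓ, e₃₀, e₀₃, e₂₁]))
    e₁₂ ℓ hℓ (by rintro ((x | x) | x) y <;> simp [ℓ, e₃₀, e₀₃, e₂₁, e₁₂])
  refine ⟨(RelIso.ofSurjective e (Set.range_eq_univ.mp ?_)).symm⟩
  simp only [e, e₃₀, e₀₃, e₂₁, e₁₂, Embedding.range_sumElim, range_tokenGraphSumEmbedding]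
  ext s
  have hs : #s.1.toLeft ≤ 3 := card_toLeft_le.trans_eq s.2
  simp only [Set.mem_union, Set.mem_ofPred_eq, Set.mem_univ, iff_true]
  omega

theorem stmt0 {α β : Type*} [Fintype α] [Fintype β] [DecidableEq α] [DecidableEq β]
    (G : SimpleGraph α) (H : SimpleGraph β) :
    Nonempty (tokenGraph (G ⊕g H) 3 ≃g
      (tokenGraph G 3 ⊕g tokenGraph H 3 ⊕g (tokenGraph G 2 □ H) ⊕g (tokenGraph H 2 □ G))) :=
  stmt0_general G H
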